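/- arXiv:1104.4468 — 2 statements merged into one kernel-verified Lean document; each statement's English description precedes it below -/
import Mathlib

section
/- Let J be the all-ones matrix on a finite set D and σ a Hermitian matrix on D with unit diagonal such that (J−σ)∘(J−σ) = λ(J−σ) for some λ > 0. Let Γ be a Hermitian matrix satisfying Γ ∘ (J−σ) = λΓ, with operator norm ‖Γ‖ = d, and let v be a unit principal eigenvector of Γ with eigenvalue d. For γ > 0 define Γ_m = I + γ(dI − Γ). Then: Tr(Γ_m vv*) = 1; Tr(Γ_m (σ ∘ vv*)) = 1 + λγd; and I ⪯ Γ_m ⪯ (1 + 2γd)·I. -/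
open Matrix
open scoped ComplexOrder

/-- Operator (spectral) norm of a matrix. -/
noncomputable def opNorm {n : Type*} [Fintype n] [DecidableEq n] (A : Matrix n n ℂ) : ℝ :=
  ‖LinearMap.toContinuousLinearMap (Matrix.toEuclideanLin A)‖

/-- The rank-one matrix `vv*`. -/
def outer {D : Type*} (v : D → ℂ) : Matrix D D ℂ :=
  Matrix.of fun x y => v x * starRingEnd ℂ (v y)

/-!
Writing `Γ ⊙ (J - σ) = λΓ` as `Γ ⊙ σ = (1 - λ)Γ`, the matrix `σ` is the constant `1 - λ` on the
support of `Γ`, which is symmetric because `Γ` is Hermitian. Hence `σ` acts on `Γ` as a scalar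
inside the trace: `Tr(Γ (σ ⊙ vv*)) = (1 - λ) Tr(Γ vv*) = (1 - λ) d`, while `Tr(σ ⊙ vv*) = 1`
because `σ` has unit diagonal. The operator inequalities are `-‖Γ‖ I ⪯ Γ ⪯ ‖Γ‖ I`, scaled by `γ`.
-/

namespace Matrix

theorem hadamard_sub {m n α : Type*} [NonUnitalNonAssocRing α] (A B C : Matrix m n α) :
    A ⊙ (B - C) = A ⊙ B - A ⊙ C := by
  ext
  simp [mul_sub]

theorem trace_mul_hadamard {n α : Type*} [Fintype n] [CommSemiring α] (A S M : Matrix n n α) :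
    (A * (S ⊙ M)).trace = ((A ⊙ Sᵀ) * M).trace := by
  rw [← transpose_transpose (S ⊙ M), ← sum_hadamard_eq, transpose_hadamard, ← hadamard_assoc,
    sum_hadamard_eq, transpose_transpose]

theorem trace_hadamard_of_diag_eq_one {n α : Type*} [Fintype n] [MulOneClass α]
    [AddCommMonoid α] {S : Matrix n n α} (hS : ∀ x, S x x = 1) (M : Matrix n n α) :
    (S ⊙ M).trace = M.trace := by
  simp [trace, hS]

theorem IsHermitian.hadamard_transpose_eq_smul {n α : Type*} [Field α] [StarRing α]
    {A S : Matrix n n α} (hA : A.IsHermitian) {c : α} (h : A ⊙ S = c • A) :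
    A ⊙ Sᵀ = c • A := by
  ext x y
  have hyx : A y x * S y x = c * A y x := congr_fun₂ h y x
  simp only [hadamard_apply, transpose_apply, smul_apply, smul_eq_mul]
  by_cases hA0 : A y x = 0
  · simp [← hA.apply x y, hA0]
  · rw [mul_left_cancel₀ hA0 (hyx.trans (mul_comm _ _))]
    ring

section L2Operator

open scoped Matrix.Norms.L2Operator MatrixOrder

variable {n : Type*} [Fintype n] [DecidableEq n] {A : Matrix n n ℂ}

theorem IsHermitian.posSemidef_opNorm_smul_one_sub (hA : A.IsHermitian) :
    ((opNorm A : ℂ) • (1 : Matrix n n ℂ) - A).PosSemidef := by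
  have h := hA.isSelfAdjoint.le_algebraMap_norm_self
  rwa [Matrix.le_iff, Algebra.algebraMap_eq_smul_one, ← Complex.coe_smul] at h

theorem IsHermitian.posSemidef_opNorm_smul_one_add (hA : A.IsHermitian) :
    ((opNorm A : ℂ) • (1 : Matrix n n ℂ) + A).PosSemidef := by
  have h := hA.isSelfAdjoint.neg_algebraMap_norm_le_self
  rwa [Matrix.le_iff, Algebra.algebraMap_eq_smul_one, ← Complex.coe_smul, sub_neg_eq_add,
    add_comm] at h

end L2Operator

end Matrix

theorem outer_eq_vecMulVec {D : Type*} (u : D → ℂ) : outer u = vecMulVec u (star u) := rfl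

theorem trace_mul_outer_of_mulVec_eq_smul {D : Type*} [Fintype D] {A : Matrix D D ℂ}
    {v : EuclideanSpace ℂ D} (hv : ‖v‖ = 1) {μ : ℂ} (h : A *ᵥ v = μ • (v : D → ℂ)) :
    (A * outer v).trace = μ := by
  rw [outer_eq_vecMulVec, mul_vecMulVec, trace_vecMulVec, h, smul_dotProduct,
    ← EuclideanSpace.inner_eq_star_dotProduct, inner_self_eq_norm_sq_to_K, hv]
  simp

theorem trace_one_add_smul_sub_mul {D : Type*} [Fintype D] [DecidableEq D]
    (c μ : ℂ) (A B : Matrix D D ℂ) :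
    ((1 + c • (μ • 1 - A)) * B).trace = B.trace + c * (μ * B.trace - (A * B).trace) := by
  simp only [add_mul, one_mul, smul_mul, sub_mul, trace_add, trace_smul, trace_sub, smul_eq_mul]

theorem mult_witness_properties_general {D : Type*} [Fintype D] [DecidableEq D]
    (J σ Γ : Matrix D D ℂ) (hJ : J = Matrix.of fun _ _ => (1 : ℂ))
    (hσdiag : ∀ x, σ x x = 1)
    (lam : ℝ)
    (hΓherm : Γ.IsHermitian) (hΓσ : Γ ⊙ (J - σ) = (lam : ℂ) • Γ)
    (d : ℝ) (hd : opNorm Γ = d)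
    (v : EuclideanSpace ℂ D) (hv : ‖v‖ = 1)
    (heig : Γ.mulVec v = (d : ℂ) • (v : D → ℂ))
    (γ : ℝ) (hγ : 0 < γ)
    (Γm : Matrix D D ℂ) (hΓm : Γm = 1 + (γ : ℂ) • ((d : ℂ) • (1 : Matrix D D ℂ) - Γ)) :
    (Γm * outer v).trace = 1 ∧
    (Γm * (σ ⊙ outer v)).trace = 1 + lam * γ * d ∧
    (Γm - 1).PosSemidef ∧ (((1 + 2 * γ * d : ℝ) : ℂ) • (1 : Matrix D D ℂ) - Γm).PosSemidef := by
  have hP : (outer v).trace = 1 := by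
    simpa using trace_mul_outer_of_mulVec_eq_smul (A := 1) hv (by simp)
  have hΓP : (Γ * outer v).trace = d := trace_mul_outer_of_mulVec_eq_smul hv heig
  have hσP : (σ ⊙ outer v).trace = 1 := (trace_hadamard_of_diag_eq_one hσdiag _).trans hP
  have hΓσ' : Γ ⊙ σ = (1 - lam : ℂ) • Γ := by
    have hΓJ : Γ ⊙ J = Γ := by rw [hJ]; exact hadamard_of_one Γ
    rw [hadamard_sub, hΓJ] at hΓσ
    rw [sub_smul, one_smul, ← hΓσ, sub_sub_cancel]
  have hΓσP : (Γ * (σ ⊙ outer v)).trace = (1 - lam) * d := by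
    rw [trace_mul_hadamard, hΓherm.hadamard_transpose_eq_smul hΓσ', smul_mul, trace_smul, hΓP,
      smul_eq_mul]
  have hγ' : (0 : ℂ) ≤ γ := Complex.zero_le_real.mpr hγ.le
  subst hΓm
  refine ⟨?_, ?_, ?_, ?_⟩
  · rw [trace_one_add_smul_sub_mul, hP, hΓP]
    ring
  · rw [trace_one_add_smul_sub_mul, hσP, hΓσP]
    ring
  · rw [add_sub_cancel_left, ← hd]
    exact hΓherm.posSemidef_opNorm_smul_one_sub.smul hγ'
  · have h := hΓherm.posSemidef_opNorm_smul_one_add.smul hγ'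
    rw [hd] at h
    convert h using 1
    push_cast
    module

/-- Properties of the multiplicative adversary witness `Γ_m = I + γ(dI − Γ)`
(part of Claim `madvadv`). -/
theorem mult_witness_properties {D : Type*} [Fintype D] [DecidableEq D]
    (J σ Γ : Matrix D D ℂ) (hJ : J = Matrix.of fun _ _ => (1 : ℂ))
    (hσherm : σ.IsHermitian) (hσdiag : ∀ x, σ x x = 1)
    (lam : ℝ) (hlam : 0 < lam)
    (hσlam : (J - σ) ⊙ (J - σ) = (lam : ℂ) • (J - σ))
    (hΓherm : Γ.IsHermitian) (hΓσ : Γ ⊙ (J - σ) = (lam : ℂ) • Γ)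
    (d : ℝ) (hd : opNorm Γ = d)
    (v : EuclideanSpace ℂ D) (hv : ‖v‖ = 1)
    (heig : Γ.mulVec v = (d : ℂ) • (v : D → ℂ))
    (γ : ℝ) (hγ : 0 < γ)
    (Γm : Matrix D D ℂ) (hΓm : Γm = 1 + (γ : ℂ) • ((d : ℂ) • (1 : Matrix D D ℂ) - Γ)) :
    (Γm * outer v).trace = 1 ∧
    (Γm * (σ ⊙ outer v)).trace = 1 + lam * γ * d ∧
    (Γm - 1).PosSemidef ∧ (((1 + 2 * γ * d : ℝ) : ℂ) • (1 : Matrix D D ℂ) - Γm).PosSemidef :=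
  mult_witness_properties_general J σ Γ hJ hσdiag lam hΓherm hΓσ d hd v hv heig γ hγ Γm hΓm
end

section
/- Let Γ' be a Hermitian matrix on a finite index set D, d = ‖Γ'‖ its operator norm, and Δ a positive semidefinite matrix with unit diagonal such that I + Γ' ∘ (J − Δ) ⪰ 0 and I − Γ' ∘ (J − Δ) ⪰ 0. For γ > 0 set c = 1 + γ and Γ_m = (I + γ(dI − Γ'))/(1 + γ(d − b)) for any b ≤ d making the denominator positive. Then Γ_m ∘ (cΔ − J) ⪰ 0 and Γ_m ∘ (cJ − Δ) ⪰ 0, i.e., c⁻¹Γ_m ⪯ Γ_m ∘ Δ ⪯ c·Γ_m. -/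
open Matrix
open scoped ComplexOrder

/-!
Since `Δ` has unit diagonal, both `cΔ - J` and `cJ - Δ` have diagonal `γ = c - 1`, and an entrywise
computation gives, with `s = 1 + γ (d - b)`,
`s • Γm ⊙ (cΔ - J) = γ • (I + Γ' ⊙ (J - Δ) + γ • (dI - Γ') ⊙ Δ)` and
`s • Γm ⊙ (cJ - Δ) = γ • (I - Γ' ⊙ (J - Δ) + γ • (dI - Γ'))`.
Both right-hand sides are positive semidefinite: `dI - Γ' ⪰ 0` because `‖Γ'‖ = d`, and the Schur
product theorem handles the Hadamard product with `Δ`. The two remaining claims are rescalings of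
these, as `Γm ⊙ J = Γm`.
-/

open scoped Matrix.Norms.L2Operator MatrixOrder in
lemma posSemidef_smul_one_sub_of_opNorm_le {n : Type*} [Fintype n] [DecidableEq n]
    {A : Matrix n n ℂ} (hA : A.IsHermitian) {d : ℝ} (hd : opNorm A ≤ d) :
    ((d : ℂ) • (1 : Matrix n n ℂ) - A).PosSemidef := by
  -- `opNorm A` is definitionally the norm `‖A‖` of the matrix C⋆-algebra.
  have hA_le : A ≤ algebraMap ℝ (Matrix n n ℂ) d :=
    hA.isSelfAdjoint.le_algebraMap_norm_self.trans (algebraMap_mono _ hd)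
  rwa [Algebra.algebraMap_eq_smul_one, ← Complex.coe_smul] at hA_le

section Hadamard

variable {m n R : Type*} [CommRing R]

lemma hadamard_smul_sub_of_one (A B : Matrix m n R) (c : R) :
    A ⊙ (c • B - of fun _ _ => 1) = c • (A ⊙ B) - A := by
  ext i j
  simp [mul_sub, mul_left_comm]

lemma hadamard_smul_of_one_sub (A B : Matrix m n R) (c : R) :
    A ⊙ (c • (of fun _ _ => 1) - B) = c • A - A ⊙ B := by
  ext i j
  simp [mul_sub, mul_comm]

variable [DecidableEq n] {Γ Δ : Matrix n n R}

lemma one_add_smul_hadamard_smul_sub_of_one (hΔ : ∀ i, Δ i i = 1) (γ d : R) :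
    (1 + γ • (d • 1 - Γ)) ⊙ ((1 + γ) • Δ - of fun _ _ => 1) =
      γ • (1 + Γ ⊙ ((of fun _ _ => 1) - Δ) + γ • ((d • 1 - Γ) ⊙ Δ)) := by
  ext i j
  simp only [hadamard_apply, Matrix.add_apply, Matrix.sub_apply, Matrix.smul_apply, smul_eq_mul,
    of_apply]
  rcases eq_or_ne i j with rfl | hij
  · rw [one_apply_eq, hΔ]
    ring
  · rw [one_apply_ne hij]
    ring

lemma one_add_smul_hadamard_smul_of_one_sub (hΔ : ∀ i, Δ i i = 1) (γ d : R) :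
    (1 + γ • (d • 1 - Γ)) ⊙ ((1 + γ) • (of fun _ _ => 1) - Δ) =
      γ • (1 - Γ ⊙ ((of fun _ _ => 1) - Δ) + γ • (d • 1 - Γ)) := by
  ext i j
  simp only [hadamard_apply, Matrix.add_apply, Matrix.sub_apply, Matrix.smul_apply, smul_eq_mul,
    of_apply]
  rcases eq_or_ne i j with rfl | hij
  · rw [one_apply_eq, hΔ]
    ring
  · rw [one_apply_ne hij]
    ring

end Hadamard

theorem additive_to_multiplicative_witness_general {D : Type*} [Fintype D] [DecidableEq D]
    (J Γ' Δ : Matrix D D ℂ) (hJ : J = Matrix.of fun _ _ => (1 : ℂ))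
    (hΓherm : Γ'.IsHermitian) (d : ℝ) (hd : opNorm Γ' = d)
    (hΔ : Δ.PosSemidef) (hΔdiag : ∀ x, Δ x x = 1)
    (hplus : ((1 : Matrix D D ℂ) + Γ' ⊙ (J - Δ)).PosSemidef)
    (hminus : ((1 : Matrix D D ℂ) - Γ' ⊙ (J - Δ)).PosSemidef)
    (γ : ℝ) (hγ : 0 < γ) (c : ℝ) (hc : c = 1 + γ)
    (b : ℝ) (hpos : 0 < 1 + γ * (d - b))
    (Γm : Matrix D D ℂ)
    (hΓm : Γm = ((1 + γ * (d - b) : ℝ) : ℂ)⁻¹ •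
      ((1 : Matrix D D ℂ) + (γ : ℂ) • ((d : ℂ) • (1 : Matrix D D ℂ) - Γ'))) :
    (Γm ⊙ ((c : ℂ) • Δ - J)).PosSemidef ∧ (Γm ⊙ ((c : ℂ) • J - Δ)).PosSemidef ∧
    (Γm ⊙ Δ - (c : ℂ)⁻¹ • Γm).PosSemidef ∧ ((c : ℂ) • Γm - Γm ⊙ Δ).PosSemidef := by
  subst hJ
  have hdΓ := posSemidef_smul_one_sub_of_opNorm_le hΓherm hd.le
  have hγ₀ : (0 : ℂ) ≤ γ := Complex.zero_le_real.mpr hγ.le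
  have hc₀ : (0 : ℂ) < c := Complex.zero_lt_real.mpr (by linarith)
  have hs₀ : (0 : ℂ) ≤ ((1 + γ * (d - b) : ℝ) : ℂ)⁻¹ := by
    rw [← Complex.ofReal_inv]
    exact Complex.zero_le_real.mpr (inv_nonneg.mpr hpos.le)
  have hc' : (c : ℂ) = 1 + γ := by exact_mod_cast hc
  have lower : (Γm ⊙ ((c : ℂ) • Δ - of fun _ _ => 1)).PosSemidef := by
    rw [hΓm, smul_hadamard, hc', one_add_smul_hadamard_smul_sub_of_one hΔdiag]
    exact ((hplus.add ((hdΓ.hadamard hΔ).smul hγ₀)).smul hγ₀).smul hs₀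
  have upper : (Γm ⊙ ((c : ℂ) • (of fun _ _ => 1) - Δ)).PosSemidef := by
    rw [hΓm, smul_hadamard, hc', one_add_smul_hadamard_smul_of_one_sub hΔdiag]
    exact ((hminus.add (hdΓ.smul hγ₀)).smul hγ₀).smul hs₀
  refine ⟨lower, upper, ?_, ?_⟩
  · have hlower_eq : Γm ⊙ Δ - (c : ℂ)⁻¹ • Γm = (c : ℂ)⁻¹ • ((c : ℂ) • Γm ⊙ Δ - Γm) := by
      rw [smul_sub, inv_smul_smul₀ hc₀.ne']
    rw [hlower_eq, ← hadamard_smul_sub_of_one]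
    exact lower.smul (inv_nonneg.mpr hc₀.le)
  · rwa [hadamard_smul_of_one_sub] at upper

/-- An additive adversary witness, rescaled, yields a multiplicative adversary witness
with `c = 1 + γ` (part of Claim `madvadv-limit`). -/
theorem additive_to_multiplicative_witness {D : Type*} [Fintype D] [DecidableEq D]
    (J Γ' Δ : Matrix D D ℂ) (hJ : J = Matrix.of fun _ _ => (1 : ℂ))
    (hΓherm : Γ'.IsHermitian) (d : ℝ) (hd : opNorm Γ' = d)
    (hΔ : Δ.PosSemidef) (hΔdiag : ∀ x, Δ x x = 1)
    (hplus : ((1 : Matrix D D ℂ) + Γ' ⊙ (J - Δ)).PosSemidef)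
    (hminus : ((1 : Matrix D D ℂ) - Γ' ⊙ (J - Δ)).PosSemidef)
    (γ : ℝ) (hγ : 0 < γ) (c : ℝ) (hc : c = 1 + γ)
    (b : ℝ) (hb : b ≤ d) (hpos : 0 < 1 + γ * (d - b))
    (Γm : Matrix D D ℂ)
    (hΓm : Γm = ((1 + γ * (d - b) : ℝ) : ℂ)⁻¹ •
      ((1 : Matrix D D ℂ) + (γ : ℂ) • ((d : ℂ) • (1 : Matrix D D ℂ) - Γ'))) :
    (Γm ⊙ ((c : ℂ) • Δ - J)).PosSemidef ∧ (Γm ⊙ ((c : ℂ) • J - Δ)).PosSemidef ∧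
    (Γm ⊙ Δ - (c : ℂ)⁻¹ • Γm).PosSemidef ∧ ((c : ℂ) • Γm - Γm ⊙ Δ).PosSemidef :=
  additive_to_multiplicative_witness_general J Γ' Δ hJ hΓherm d hd hΔ hΔdiag hplus hminus γ hγ c hc
    b hpos Γm hΓm
end
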